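/- For every pivot (v, i) ∈ [1,m] × [1,n], the following recurrence holds: L(v,i) = -∞ if mfi(v,i) = [-∞,∞]; L(v,i) = i if mfi(v,i) ≠ [-∞,∞] and v has no left child in CT(P); and otherwise (mfi(v,i) ≠ [-∞,∞] and v.L ≠ nil) L(v,i) = max{ L(v.L, j) : 1 ≤ j ≤ i-1, T[i] < T[j], R(v.L, j) < i }. -/

import Mathlib

/-- Ordered binary trees (possibly empty). -/
inductive BTree : Type
  | nil : BTree
  | node : BTree → BTree → BTree
  deriving DecidableEq

/-- The minimum value of a list of integers (with default `0` for the empty list). -/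
noncomputable def minval (l : List ℤ) : ℤ := l.minimum.untopD 0

/-- The 0-based index of the leftmost occurrence of the minimum value. -/
noncomputable def minidx0 (l : List ℤ) : ℕ := l.idxOf (minval l)

theorem minidx0_lt_length {l : List ℤ} (h : l ≠ []) : minidx0 l < l.length := by
  obtain ⟨a, ha⟩ := WithTop.ne_top_iff_exists.mp (List.minimum_ne_top_of_ne_nil h)
  have hmem : a ∈ l := List.minimum_mem ha.symm
  have hval : minval l = a := by simp [minval, ← ha]
  rw [minidx0, hval]
  exact List.idxOf_lt_length_iff.mpr hmem

/-- The Cartesian tree of a string of integers. -/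
noncomputable def CT (l : List ℤ) : BTree :=
  if h : l = [] then .nil
  else .node (CT (l.take (minidx0 l))) (CT (l.drop (minidx0 l + 1)))
termination_by l.length
decreasing_by
  · have := minidx0_lt_length h
    simp [List.length_take]
    omega
  · have : 0 < l.length := List.length_pos_iff.mpr h
    simp [List.length_drop]
    omega

/-- The value of the 1-based position `i` of the string `T` (default `0`). -/
def val (T : List ℤ) (i : ℕ) : ℤ := T.getD (i - 1) 0

/-- `IsSubSeq n m I` : `I` is a strictly increasing sequence of `m` subscripts in `[1, n]`. -/
def IsSubSeq (n m : ℕ) (I : List ℕ) : Prop :=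
  I.length = m ∧ I.Pairwise (· < ·) ∧ ∀ j ∈ I, 1 ≤ j ∧ j ≤ n

/-- The subsequence `T_I` of `T` selected by the (1-based) subscript sequence `I`. -/
def seqAt (T : List ℤ) (I : List ℕ) : List ℤ := I.map (val T)

/-- The substring `P[a..b]` of `P` (1-based, inclusive). -/
def subslice (P : List ℤ) (a b : ℕ) : List ℤ := (P.take b).drop (a - 1)

/-- The left end of the maximal interval around position `v` in which `P[v]` is minimal:
one plus the rightmost position `j < v` carrying a value smaller than `P[v]` (or `1`). -/
def leftEnd (P : List ℤ) (v : ℕ) : ℕ :=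
  (((Finset.Icc 1 (v - 1)).filter (fun j => val P j < val P v)).max.unbotD 0) + 1

/-- The right end of the maximal interval around position `v` in which `P[v]` is minimal:
the leftmost position `j > v` carrying a value smaller than `P[v]`, minus one (or `|P|`). -/
def rightEnd (P : List ℤ) (v : ℕ) : ℕ :=
  (((Finset.Icc (v + 1) P.length).filter (fun j => val P j < val P v)).min.untopD
    (P.length + 1)) - 1

/-- `P_v`: the substring of `P` spanned by the subtree of `CT(P)` rooted at node `v`
(nodes are identified with 1-based positions of `P`). -/
def Psub (P : List ℤ) (v : ℕ) : List ℤ := subslice P (leftEnd P v) (rightEnd P v)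

/-- The left child `v.L` of node `v` in `CT(P)` (as a 1-based position), if it exists. -/
noncomputable def leftChild (P : List ℤ) (v : ℕ) : Option ℕ :=
  if leftEnd P v < v then some (leftEnd P v + minidx0 (subslice P (leftEnd P v) (v - 1)))
  else none

/-- The right child `v.R` of node `v` in `CT(P)` (as a 1-based position), if it exists. -/
noncomputable def rightChild (P : List ℤ) (v : ℕ) : Option ℕ :=
  if v < rightEnd P v then some (v + 1 + minidx0 (subslice P (v + 1) (rightEnd P v)))
  else none

/-- `[ℓ, r]` is a fixed-interval with pivot `(v, i)`. -/
def IsFixedInterval (T P : List ℤ) (v i ℓ r : ℕ) : Prop :=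
  1 ≤ ℓ ∧ r ≤ T.length ∧
    ∃ I : List ℕ, IsSubSeq T.length (Psub P v).length I ∧ i ∈ I ∧
      (∀ j ∈ I, ℓ ≤ j ∧ j ≤ r) ∧ CT (seqAt T I) = CT (Psub P v) ∧
      val T i = minval (seqAt T I)

/-- `IntervalSsubset (ℓ', r') (ℓ, r)` : the interval `[ℓ', r']` is strictly contained
in the interval `[ℓ, r]`. -/
def IntervalSsubset (p q : ℕ × ℕ) : Prop := q.1 ≤ p.1 ∧ p.2 ≤ q.2 ∧ p ≠ q

/-- `[ℓ, r]` is a minimal fixed-interval with pivot `(v, i)`. -/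
def IsMinFixedInterval (T P : List ℤ) (v i ℓ r : ℕ) : Prop :=
  IsFixedInterval T P v i ℓ r ∧
    ¬∃ ℓ' r', IsFixedInterval T P v i ℓ' r' ∧ IntervalSsubset (ℓ', r') (ℓ, r)

open Classical in
/-- The left endpoint `L(v, i)` of the minimal fixed-interval `mfi(v, i)`,
which is `-∞` (i.e. `⊥`) if no (minimal) fixed-interval with pivot `(v, i)` exists. -/
noncomputable def mfiL (T P : List ℤ) (v i : ℕ) : WithBot ℕ :=
  if h : ∃ ℓ r, IsMinFixedInterval T P v i ℓ r then (h.choose : WithBot ℕ) else ⊥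

open Classical in
/-- The right endpoint `R(v, i)` of the minimal fixed-interval `mfi(v, i)`,
which is `∞` (i.e. `⊤`) if no (minimal) fixed-interval with pivot `(v, i)` exists. -/
noncomputable def mfiR (T P : List ℤ) (v i : ℕ) : WithTop ℕ :=
  if h : ∃ ℓ r, IsMinFixedInterval T P v i ℓ r then (h.choose_spec.choose : WithTop ℕ) else ⊤

/-- `I` is a trace of pattern `P` in text `T`. -/
def IsTrace (T P : List ℤ) (I : List ℕ) : Prop :=
  IsSubSeq T.length P.length I ∧ CT (seqAt T I) = CT P

/-- `[ℓ, r]` is an occurrence interval for `P` over `T`. -/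
def IsOccInterval (T P : List ℤ) (ℓ r : ℕ) : Prop :=
  1 ≤ ℓ ∧ r ≤ T.length ∧ ∃ I, IsTrace T P I ∧ ∀ j ∈ I, ℓ ≤ j ∧ j ≤ r

/-- `[ℓ, r]` is a minimal occurrence interval for `P` over `T`. -/
def IsMinOccInterval (T P : List ℤ) (ℓ r : ℕ) : Prop :=
  IsOccInterval T P ℓ r ∧
    ¬∃ ℓ' r', IsOccInterval T P ℓ' r' ∧ IntervalSsubset (ℓ', r') (ℓ, r)

/-!
Since `CT(T_I)` and `CT(P_v)` both split at their minima, a witness of a fixed interval with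
pivot `(v, i)` is exactly `I₁ ++ i :: I₂` with `I₁` a trace of `P_{v.L}` before `i`, `I₂` a
trace of `P_{v.R}` after `i`, and all their values above `T[i]`. Halves of different witnesses
can thus be exchanged, so fixed intervals with a common pivot are closed under intersection and
the minimal one is unique. Its left end depends on the left half only: a left half `I₁` is
itself a witness for the pivot `(v.L, j)`, `T[j] = min T_{I₁}`, inside `[ℓ, i - 1]`; conversely
any witness for a pivot `(v.L, j)` with `T[j] > T[i]` lying before `i` serves as a left half.
-/

def BTree.size : BTree → ℕ
  | .nil => 0
  | .node l r => l.size + r.size + 1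

section CartesianTree

lemma CT_nil : CT [] = .nil := by
  rw [CT]; simp

lemma CT_of_ne_nil {l : List ℤ} (h : l ≠ []) :
    CT l = .node (CT (l.take (minidx0 l))) (CT (l.drop (minidx0 l + 1))) := by
  rw [CT]; simp [h]

lemma size_CT (l : List ℤ) : (CT l).size = l.length := by
  induction l using CT.induct with
  | case1 => simp [CT_nil, BTree.size]
  | case2 l h ih₁ ih₂ =>
    have := minidx0_lt_length h
    rw [CT_of_ne_nil h, BTree.size, ih₁, ih₂, List.length_take, List.length_drop]
    omega

lemma length_eq_of_CT_eq {l₁ l₂ : List ℤ} (h : CT l₁ = CT l₂) :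
    l₁.length = l₂.length := by
  rw [← size_CT, ← size_CT, h]

lemma minval_eq_of_mem {l : List ℤ} {x : ℤ} (hx : x ∈ l) (h : ∀ y ∈ l, x ≤ y) :
    minval l = x := by
  rw [minval, List.minimum_eq_coe_iff.2 ⟨hx, h⟩]
  rfl

lemma minval_spec {l : List ℤ} (h : l ≠ []) :
    minval l ∈ l ∧ ∀ y ∈ l, minval l ≤ y := by
  obtain ⟨a, ha⟩ := WithTop.ne_top_iff_exists.mp (List.minimum_ne_top_of_ne_nil h)
  rw [minval, ← ha]
  exact List.minimum_eq_coe_iff.1 ha.symm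

lemma minval_mem {l : List ℤ} (h : l ≠ []) : minval l ∈ l := (minval_spec h).1

lemma minval_le {l : List ℤ} {y : ℤ} (hy : y ∈ l) : minval l ≤ y :=
  (minval_spec (List.ne_nil_of_mem hy)).2 y hy

lemma CT_append {l₁ l₂ : List ℤ} {x : ℤ} (h₁ : ∀ y ∈ l₁, x < y)
    (h₂ : ∀ y ∈ l₂, x < y) :
    CT (l₁ ++ x :: l₂) = .node (CT l₁) (CT l₂) := by
  have hmin : minval (l₁ ++ x :: l₂) = x := by
    refine minval_eq_of_mem (by simp) fun y hy => ?_
    simp only [List.mem_append, List.mem_cons] at hy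
    rcases hy with hy | rfl | hy
    exacts [(h₁ y hy).le, le_rfl, (h₂ y hy).le]
  have hidx : minidx0 (l₁ ++ x :: l₂) = l₁.length := by
    rw [minidx0, hmin, List.idxOf_append_of_notMem fun hx => (h₁ x hx).false]
    simp
  rw [CT_of_ne_nil (by simp), hidx]
  simp

end CartesianTree

section Positions

variable {P : List ℤ}

lemma val_eq_getElem {j : ℕ} (h₁ : 1 ≤ j) (h₂ : j ≤ P.length) :
    val P j = P[j - 1]'(by omega) := by
  rw [val, List.getD_eq_getElem?_getD, List.getElem?_eq_getElem (by omega)]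
  rfl

lemma val_inj (hP : P.Nodup) {j₁ j₂ : ℕ} (h₁ : 1 ≤ j₁ ∧ j₁ ≤ P.length)
    (h₂ : 1 ≤ j₂ ∧ j₂ ≤ P.length) (h : val P j₁ = val P j₂) : j₁ = j₂ := by
  rw [val_eq_getElem h₁.1 h₁.2, val_eq_getElem h₂.1 h₂.2, hP.getElem_inj_iff] at h
  omega

variable {a b : ℕ}

lemma subslice_eq_map (ha : 1 ≤ a) (hb : b ≤ P.length) :
    subslice P a b = (List.range' a (b + 1 - a)).map (val P) := by
  apply List.ext_getElem
  · simp only [subslice, List.length_drop, List.length_take, List.length_map,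
      List.length_range']
    omega
  · intro k h₁ h₂
    simp only [List.length_map, List.length_range'] at h₂
    simp only [subslice, List.getElem_drop, List.getElem_take, List.getElem_map,
      List.getElem_range', val_eq_getElem (P := P) (j := a + 1 * k) (by omega) (by omega)]
    congr 1
    omega

lemma length_subslice (ha : 1 ≤ a) (hb : b ≤ P.length) :
    (subslice P a b).length = b + 1 - a := by
  simp [subslice_eq_map ha hb]

lemma mem_subslice (ha : 1 ≤ a) (hb : b ≤ P.length) {x : ℤ} :
    x ∈ subslice P a b ↔ ∃ j, a ≤ j ∧ j ≤ b ∧ val P j = x := by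
  simp only [subslice_eq_map ha hb, List.mem_map, List.mem_range'_1]
  constructor
  · rintro ⟨j, hj, rfl⟩; exact ⟨j, by omega, by omega, rfl⟩
  · rintro ⟨j, hj₁, hj₂, rfl⟩; exact ⟨j, by omega, rfl⟩

lemma subslice_eq_append {v : ℕ} (ha : 1 ≤ a) (hav : a ≤ v) (hvb : v ≤ b)
    (hb : b ≤ P.length) :
    subslice P a b = subslice P a (v - 1) ++ val P v :: subslice P (v + 1) b := by
  rw [subslice_eq_map ha hb, subslice_eq_map ha (by omega), subslice_eq_map (by omega) hb,
    show b + 1 - a = (v - 1 + 1 - a) + (b + 1 - (v + 1) + 1) by omega,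
    ← List.range'_append_1, List.range'_succ, show a + (v - 1 + 1 - a) = v by omega]
  simp

lemma subslice_argmin_spec (hP : P.Nodup) (ha : 1 ≤ a) (hab : a ≤ b) (hb : b ≤ P.length) :
    a + minidx0 (subslice P a b) ≤ b ∧
      ∀ j, a ≤ j → j ≤ b → j ≠ a + minidx0 (subslice P a b) →
      val P (a + minidx0 (subslice P a b)) < val P j := by
  set k := minidx0 (subslice P a b)
  have hlen := length_subslice (P := P) ha hb
  have hne : subslice P a b ≠ [] := List.ne_nil_of_length_pos (by omega)
  have hk : k < b + 1 - a := hlen ▸ minidx0_lt_length hne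
  have hval : val P (a + k) = minval (subslice P a b) := by
    rw [← List.getElem_idxOf (List.idxOf_lt_length_iff.mpr (minval_mem hne))]
    simp only [subslice_eq_map ha hb, List.getElem_map, List.getElem_range']
    simp [k, minidx0, subslice_eq_map ha hb]
  refine ⟨by omega, fun j hj₁ hj₂ hjk => ?_⟩
  have hle : val P (a + k) ≤ val P j :=
    hval ▸ minval_le ((mem_subslice ha hb).2 ⟨j, hj₁, hj₂, rfl⟩)
  exact lt_of_le_of_ne hle fun h =>
    hjk (val_inj hP ⟨by omega, by omega⟩ ⟨by omega, by omega⟩ h).symm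

end Positions

section Ends

variable {P : List ℤ} {v : ℕ}

lemma leftEnd_pos : 1 ≤ leftEnd P v := by
  simp [leftEnd]

lemma lt_leftEnd_of_lt {j : ℕ} (hj : 1 ≤ j ∧ j ≤ v - 1) (hlt : val P j < val P v) :
    j < leftEnd P v := by
  have hmax := Finset.le_max (s := (Finset.Icc 1 (v - 1)).filter (val P · < val P v))
    (Finset.mem_filter.2 ⟨Finset.mem_Icc.2 hj, hlt⟩)
  rw [leftEnd]
  cases h : ((Finset.Icc 1 (v - 1)).filter (val P · < val P v)).max
  · simp [h] at hmax
  · rw [h] at hmax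
    have : j ≤ _ := WithBot.coe_le_coe.1 hmax
    simp only [WithBot.unbotD_coe]
    omega

lemma leftEnd_spec (hv : 1 ≤ v) :
    leftEnd P v ≤ v ∧ (leftEnd P v = 1 ∨ val P (leftEnd P v - 1) < val P v) := by
  rw [leftEnd]
  cases h : ((Finset.Icc 1 (v - 1)).filter (val P · < val P v)).max with
  | bot => simp only [WithBot.unbotD_bot, zero_add, tsub_self, true_or, and_true]; omega
  | coe m =>
    have hm := Finset.mem_of_max h
    simp only [Finset.mem_filter, Finset.mem_Icc] at hm
    simp only [WithBot.unbotD_coe, add_tsub_cancel_right]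
    exact ⟨by omega, .inr hm.2⟩

lemma leftEnd_eq {a : ℕ} (ha : 1 ≤ a) (hav : a ≤ v)
    (hin : ∀ j, a ≤ j → j < v → val P v < val P j)
    (hout : a = 1 ∨ val P (a - 1) < val P v) : leftEnd P v = a := by
  obtain ⟨hle, hbd⟩ := leftEnd_spec (P := P) (by omega : 1 ≤ v)
  refine le_antisymm ?_ ?_
  · by_contra! hgt
    rcases hbd with h | h
    · omega
    · exact (hin _ (by omega) (by omega)).not_gt h
  · rcases eq_or_ne a 1 with h₁ | h₁
    · exact h₁ ▸ leftEnd_pos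
    · have h := hout.resolve_left h₁
      have := lt_leftEnd_of_lt (P := P) (v := v) (j := a - 1) (by omega) h
      omega

lemma rightEnd_lt_of_lt {j : ℕ} (hj : v + 1 ≤ j ∧ j ≤ P.length) (hlt : val P j < val P v) :
    rightEnd P v < j := by
  have hmin := Finset.min_le (s := (Finset.Icc (v + 1) P.length).filter (val P · < val P v))
    (Finset.mem_filter.2 ⟨Finset.mem_Icc.2 hj, hlt⟩)
  rw [rightEnd]
  cases h : ((Finset.Icc (v + 1) P.length).filter (val P · < val P v)).min
  · simp [h] at hmin
  · rw [h] at hmin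
    have : _ ≤ j := WithTop.coe_le_coe.1 hmin
    simp only [WithTop.untopD_coe]
    omega

lemma rightEnd_spec (hv : v ≤ P.length) : v ≤ rightEnd P v ∧ rightEnd P v ≤ P.length ∧
    (rightEnd P v = P.length ∨ val P (rightEnd P v + 1) < val P v) := by
  rw [rightEnd]
  cases h : ((Finset.Icc (v + 1) P.length).filter (val P · < val P v)).min with
  | top => simpa using hv
  | coe m =>
    have hm := Finset.mem_of_min h
    simp only [Finset.mem_filter, Finset.mem_Icc] at hm
    simp only [WithTop.untopD_coe, Nat.sub_add_cancel (by omega : 1 ≤ m)]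
    exact ⟨by omega, by omega, .inr hm.2⟩

lemma rightEnd_eq {b : ℕ} (hvb : v ≤ b) (hb : b ≤ P.length)
    (hin : ∀ j, v < j → j ≤ b → val P v < val P j)
    (hout : b = P.length ∨ val P (b + 1) < val P v) : rightEnd P v = b := by
  obtain ⟨hle, -, hbd⟩ := rightEnd_spec (P := P) (by omega : v ≤ P.length)
  refine le_antisymm ?_ ?_
  · rcases eq_or_ne b P.length with h₁ | h₁
    · exact h₁ ▸ (rightEnd_spec (by omega)).2.1
    · have := rightEnd_lt_of_lt (P := P) (v := v) (j := b + 1) (by omega) (hout.resolve_left h₁)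
      omega
  · by_contra! hgt
    rcases hbd with h | h
    · omega
    · exact (hin _ (by omega) (by omega)).not_gt h

end Ends

/-- `P_{v.L}`, or `[]` if `v` has no left child. -/
def leftPart (P : List ℤ) (v : ℕ) : List ℤ := subslice P (leftEnd P v) (v - 1)

/-- `P_{v.R}`, or `[]` if `v` has no right child. -/
def rightPart (P : List ℤ) (v : ℕ) : List ℤ := subslice P (v + 1) (rightEnd P v)

section Parts

variable {P : List ℤ} {v : ℕ}

lemma Psub_eq_append (hv : 1 ≤ v ∧ v ≤ P.length) :
    Psub P v = leftPart P v ++ val P v :: rightPart P v :=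
  subslice_eq_append leftEnd_pos (leftEnd_spec hv.1).1 (rightEnd_spec hv.2).1 (rightEnd_spec hv.2).2.1

lemma val_lt_of_mem_leftPart (hP : P.Nodup) (hv : 1 ≤ v ∧ v ≤ P.length) {y : ℤ}
    (hy : y ∈ leftPart P v) : val P v < y := by
  obtain ⟨j, hj₁, hj₂, rfl⟩ := (mem_subslice leftEnd_pos (by omega)).1 hy
  have hj : 1 ≤ j := leftEnd_pos.trans hj₁
  refine lt_of_le_of_ne (not_lt.1 fun hlt => ?_) fun h => ?_
  · exact (lt_leftEnd_of_lt ⟨hj, hj₂⟩ hlt).not_ge hj₁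
  · have := val_inj hP hv ⟨hj, by omega⟩ h
    omega

lemma val_lt_of_mem_rightPart (hP : P.Nodup) (hv : 1 ≤ v ∧ v ≤ P.length) {y : ℤ}
    (hy : y ∈ rightPart P v) : val P v < y := by
  have hR := rightEnd_spec (P := P) hv.2
  obtain ⟨j, hj₁, hj₂, rfl⟩ := (mem_subslice (by omega) hR.2.1).1 hy
  refine lt_of_le_of_ne (not_lt.1 fun hlt => ?_) fun h => ?_
  · exact (rightEnd_lt_of_lt ⟨hj₁, by omega⟩ hlt).not_ge hj₂
  · have := val_inj hP hv ⟨by omega, by omega⟩ h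
    omega

lemma leftPart_eq_nil (hv : 1 ≤ v) (h : leftChild P v = none) : leftPart P v = [] := by
  rw [leftChild, ite_eq_right_iff] at h
  have hle := (leftEnd_spec (P := P) hv).1
  have hv' : leftEnd P v = v := by
    by_contra hne
    exact Option.some_ne_none _ (h (by omega))
  rw [← List.length_eq_zero_iff, leftPart]
  simp only [subslice, List.length_drop, List.length_take]
  omega

lemma leftChild_spec (hP : P.Nodup) (hv : 1 ≤ v ∧ v ≤ P.length) {u : ℕ}
    (h : leftChild P v = some u) : (1 ≤ u ∧ u ≤ P.length) ∧ Psub P u = leftPart P v := by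
  rw [leftChild] at h
  split_ifs at h with hlt
  obtain rfl := Option.some_injective _ h
  set a := leftEnd P v
  have ha : 1 ≤ a := leftEnd_pos
  obtain ⟨hub, hmin⟩ := subslice_argmin_spec hP ha (by omega : a ≤ v - 1) (by omega)
  set u := a + minidx0 (subslice P a (v - 1))
  have hvu : val P v < val P u :=
    val_lt_of_mem_leftPart hP hv ((mem_subslice ha (by omega)).2 ⟨u, by omega, hub, rfl⟩)
  have hu : 1 ≤ u ∧ u ≤ P.length := ⟨by omega, by omega⟩
  have hleft : leftEnd P u = a := by
    refine leftEnd_eq ha (by omega) (fun j hj₁ hj₂ => hmin j hj₁ (by omega) (by omega)) ?_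
    exact (leftEnd_spec hv.1).2.imp_right fun h => h.trans hvu
  have hright : rightEnd P u = v - 1 :=
    rightEnd_eq hub (by omega) (fun j hj₁ hj₂ => hmin j (by omega) hj₂ (by omega))
      (.inr (by rwa [Nat.sub_add_cancel hv.1]))
  exact ⟨hu, by rw [Psub, hleft, hright, leftPart]⟩

end Parts

section Traces

variable {T Q₁ Q₂ Q : List ℤ} {x : ℤ} {i : ℕ} {I I₁ I₂ : List ℕ}

lemma seqAt_append_cons (T : List ℤ) (I₁ I₂ : List ℕ) (i : ℕ) :
    seqAt T (I₁ ++ i :: I₂) = seqAt T I₁ ++ val T i :: seqAt T I₂ := by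
  simp [seqAt]

lemma IsTrace.of_CT_eq (hs : I.Pairwise (· < ·)) (hb : ∀ j ∈ I, 1 ≤ j ∧ j ≤ T.length)
    (h : CT (seqAt T I) = CT Q) : IsTrace T Q I :=
  ⟨⟨by simpa [seqAt] using length_eq_of_CT_eq h, hs, hb⟩, h⟩

lemma IsTrace.split (hT : T.Nodup) (hx₁ : ∀ y ∈ Q₁, x < y) (hx₂ : ∀ y ∈ Q₂, x < y)
    (hI : IsTrace T (Q₁ ++ x :: Q₂) I) (hi : i ∈ I) (hmin : val T i = minval (seqAt T I)) :
    ∃ I₁ I₂, I = I₁ ++ i :: I₂ ∧ IsTrace T Q₁ I₁ ∧ IsTrace T Q₂ I₂ ∧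
      (∀ j ∈ I₁, j < i) ∧ (∀ j ∈ I₂, i < j) ∧
      ∀ j ∈ I₁ ++ I₂, val T i < val T j := by
  obtain ⟨⟨-, hs, hb⟩, hCT⟩ := hI
  obtain ⟨I₁, I₂, rfl⟩ := List.append_of_mem hi
  obtain ⟨hs₁, ⟨hgt, hs₂⟩, hlt⟩ := by
    simpa only [List.pairwise_append, List.pairwise_cons] using hs
  have hlt : ∀ j ∈ I₁, j < i := fun j hj => hlt j hj i List.mem_cons_self
  have hval : ∀ j ∈ I₁ ++ I₂, val T i < val T j := by
    intro j hj
    have hjI : j ∈ I₁ ++ i :: I₂ := by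
      simp only [List.mem_append, List.mem_cons] at hj ⊢; tauto
    have hji : j ≠ i := by
      rcases List.mem_append.1 hj with hj | hj
      exacts [(hlt j hj).ne, (hgt j hj).ne']
    refine lt_of_le_of_ne (hmin ▸ minval_le (List.mem_map_of_mem hjI)) fun h => hji ?_
    exact val_inj hT (hb j hjI) (hb i hi) h.symm
  have hval' : ∀ J, (∀ j ∈ J, j ∈ I₁ ++ I₂) → ∀ y ∈ seqAt T J, val T i < y := by
    intro J hJ y hy
    obtain ⟨j, hj, rfl⟩ := List.mem_map.1 hy
    exact hval j (hJ j hj)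
  rw [seqAt_append_cons, CT_append (hval' I₁ (by simp +contextual))
    (hval' I₂ (by simp +contextual)), CT_append hx₁ hx₂] at hCT
  injection hCT with hCT₁ hCT₂
  refine ⟨I₁, I₂, rfl, .of_CT_eq hs₁ (fun j hj => hb j (by simp [hj])) hCT₁,
    .of_CT_eq hs₂ (fun j hj => hb j (by simp [hj])) hCT₂, hlt, hgt, hval⟩

lemma IsTrace.append_cons (hx₁ : ∀ y ∈ Q₁, x < y) (hx₂ : ∀ y ∈ Q₂, x < y)
    (hi : 1 ≤ i ∧ i ≤ T.length) (h₁ : IsTrace T Q₁ I₁) (h₂ : IsTrace T Q₂ I₂)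
    (hlt : ∀ j ∈ I₁, j < i) (hgt : ∀ j ∈ I₂, i < j)
    (hval : ∀ j ∈ I₁ ++ I₂, val T i < val T j) :
    IsTrace T (Q₁ ++ x :: Q₂) (I₁ ++ i :: I₂) ∧
      val T i = minval (seqAt T (I₁ ++ i :: I₂)) := by
  have hval₁ : ∀ y ∈ seqAt T I₁, val T i < y := by
    simpa [seqAt] using fun j hj => hval j (List.mem_append_left _ hj)
  have hval₂ : ∀ y ∈ seqAt T I₂, val T i < y := by
    simpa [seqAt] using fun j hj => hval j (List.mem_append_right _ hj)
  refine ⟨.of_CT_eq ?_ ?_ ?_, ?_⟩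
  · simp only [List.pairwise_append, List.pairwise_cons, List.mem_cons]
    refine ⟨h₁.1.2.1, ⟨hgt, h₂.1.2.1⟩, ?_⟩
    rintro a ha b (rfl | hb)
    exacts [hlt a ha, (hlt a ha).trans (hgt b hb)]
  · simp only [List.mem_append, List.mem_cons]
    rintro j (hj | rfl | hj)
    exacts [h₁.1.2.2 j hj, hi, h₂.1.2.2 j hj]
  · rw [seqAt_append_cons, CT_append hval₁ hval₂, CT_append hx₁ hx₂, h₁.2, h₂.2]
  · rw [seqAt_append_cons]
    refine (minval_eq_of_mem (by simp) fun y hy => ?_).symm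
    simp only [List.mem_append, List.mem_cons] at hy
    rcases hy with hy | rfl | hy
    exacts [(hval₁ y hy).le, le_rfl, (hval₂ y hy).le]

end Traces

section FixedIntervals

variable {T P : List ℤ} {v i ℓ r : ℕ}

lemma IsFixedInterval.bounds (h : IsFixedInterval T P v i ℓ r) :
    1 ≤ ℓ ∧ r ≤ T.length ∧ ℓ ≤ i ∧ i ≤ r := by
  obtain ⟨hℓ, hr, I, -, hi, hrange, -⟩ := h
  exact ⟨hℓ, hr, hrange i hi⟩

lemma isFixedInterval_iff (hT : T.Nodup) (hP : P.Nodup) (hv : 1 ≤ v ∧ v ≤ P.length) :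
    IsFixedInterval T P v i ℓ r ↔ 1 ≤ ℓ ∧ r ≤ T.length ∧ ℓ ≤ i ∧ i ≤ r ∧
      ∃ I₁ I₂, IsTrace T (leftPart P v) I₁ ∧ IsTrace T (rightPart P v) I₂ ∧
        (∀ j ∈ I₁, ℓ ≤ j ∧ j < i) ∧ (∀ j ∈ I₂, i < j ∧ j ≤ r) ∧
        ∀ j ∈ I₁ ++ I₂, val T i < val T j := by
  have hx₁ := fun y => val_lt_of_mem_leftPart (y := y) hP hv
  have hx₂ := fun y => val_lt_of_mem_rightPart (y := y) hP hv
  constructor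
  · rintro ⟨hℓ, hr, I, hs, hi, hrange, hCT, hmin⟩
    rw [Psub_eq_append hv] at hs hCT
    obtain ⟨I₁, I₂, rfl, h₁, h₂, hlt, hgt, hval⟩ :=
      IsTrace.split hT hx₁ hx₂ ⟨hs, hCT⟩ hi hmin
    refine ⟨hℓ, hr, (hrange i hi).1, (hrange i hi).2, I₁, I₂, h₁, h₂, ?_, ?_, hval⟩
    · exact fun j hj => ⟨(hrange j (by simp [hj])).1, hlt j hj⟩
    · exact fun j hj => ⟨hgt j hj, (hrange j (by simp [hj])).2⟩
  · rintro ⟨hℓ, hr, hℓi, hir, I₁, I₂, h₁, h₂, hr₁, hr₂, hval⟩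
    obtain ⟨hI, hmin⟩ := IsTrace.append_cons hx₁ hx₂ ⟨by omega, by omega⟩ h₁ h₂
      (fun j hj => (hr₁ j hj).2) (fun j hj => (hr₂ j hj).1) hval
    rw [← Psub_eq_append hv] at hI
    refine ⟨hℓ, hr, I₁ ++ i :: I₂, hI.1, by simp, ?_, hI.2, hmin⟩
    simp only [List.mem_append, List.mem_cons]
    rintro j (hj | rfl | hj)
    · exact ⟨(hr₁ j hj).1, by have := (hr₁ j hj).2; omega⟩
    · exact ⟨hℓi, hir⟩
    · exact ⟨by have := (hr₂ j hj).1; omega, (hr₂ j hj).2⟩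

lemma IsFixedInterval.mix (hT : T.Nodup) (hP : P.Nodup) (hv : 1 ≤ v ∧ v ≤ P.length)
    {ℓ₁ r₁ ℓ₂ r₂ : ℕ} (h₁ : IsFixedInterval T P v i ℓ₁ r₁)
    (h₂ : IsFixedInterval T P v i ℓ₂ r₂) :
    IsFixedInterval T P v i ℓ₁ r₂ := by
  rw [isFixedInterval_iff hT hP hv] at h₁ h₂ ⊢
  obtain ⟨hℓ₁, -, hℓi₁, -, I₁, J₂, hI₁, -, hr₁, -, hval₁⟩ := h₁
  obtain ⟨-, hr₂, -, hir₂, J₁, I₂, -, hI₂, -, hr₂', hval₂⟩ := h₂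
  refine ⟨hℓ₁, hr₂, hℓi₁, hir₂, I₁, I₂, hI₁, hI₂, hr₁, hr₂', ?_⟩
  simp only [List.mem_append] at hval₁ hval₂ ⊢
  rintro j (hj | hj)
  exacts [hval₁ j (.inl hj), hval₂ j (.inr hj)]

lemma IsFixedInterval.inter (hT : T.Nodup) (hP : P.Nodup) (hv : 1 ≤ v ∧ v ≤ P.length)
    {ℓ₁ r₁ ℓ₂ r₂ : ℕ} (h₁ : IsFixedInterval T P v i ℓ₁ r₁)
    (h₂ : IsFixedInterval T P v i ℓ₂ r₂) :
    IsFixedInterval T P v i (max ℓ₁ ℓ₂) (min r₁ r₂) := by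
  rcases le_total ℓ₁ ℓ₂ with hl | hl <;> rcases le_total r₁ r₂ with hr | hr
  · rw [max_eq_right hl, min_eq_left hr]; exact h₂.mix hT hP hv h₁
  · rw [max_eq_right hl, min_eq_right hr]; exact h₂
  · rw [max_eq_left hl, min_eq_left hr]; exact h₁
  · rw [max_eq_left hl, min_eq_right hr]; exact h₁.mix hT hP hv h₂

lemma IsFixedInterval.exists_isMinFixedInterval (h : IsFixedInterval T P v i ℓ r) :
    ∃ ℓ' r', IsMinFixedInterval T P v i ℓ' r' := by
  classical
  have hex : ∃ d, ∃ ℓ' r', IsFixedInterval T P v i ℓ' r' ∧ r' - ℓ' = d :=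
    ⟨_, ℓ, r, h, rfl⟩
  obtain ⟨ℓ₀, r₀, h₀, hd₀⟩ := Nat.find_spec hex
  refine ⟨ℓ₀, r₀, h₀, fun ⟨ℓ', r', h', hℓ', hr', hne⟩ => ?_⟩
  have := h'.bounds
  have hlt : r' - ℓ' < Nat.find hex := by
    rw [← hd₀]
    simp only [ne_eq, Prod.mk.injEq, not_and_or] at hne hℓ' hr'
    omega
  exact Nat.find_min hex hlt ⟨ℓ', r', h', rfl⟩

lemma IsMinFixedInterval.le_of_isFixedInterval (hT : T.Nodup) (hP : P.Nodup)
    (hv : 1 ≤ v ∧ v ≤ P.length) (hmin : IsMinFixedInterval T P v i ℓ r) {ℓ' r' : ℕ}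
    (h : IsFixedInterval T P v i ℓ' r') : ℓ' ≤ ℓ ∧ r ≤ r' := by
  by_contra hc
  refine hmin.2 ⟨_, _, hmin.1.inter hT hP hv h, le_max_left _ _, min_le_left _ _,
    fun he => hc ?_⟩
  simp only [Prod.mk.injEq] at he
  omega

lemma IsMinFixedInterval.mfi_eq (hT : T.Nodup) (hP : P.Nodup) (hv : 1 ≤ v ∧ v ≤ P.length)
    (hmin : IsMinFixedInterval T P v i ℓ r) :
    mfiL T P v i = ℓ ∧ mfiR T P v i = r := by
  have h : ∃ ℓ r, IsMinFixedInterval T P v i ℓ r := ⟨ℓ, r, hmin⟩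
  have hspec := h.choose_spec.choose_spec
  have h₁ := hmin.le_of_isFixedInterval hT hP hv hspec.1
  have h₂ := hspec.le_of_isFixedInterval hT hP hv hmin.1
  rw [mfiL, mfiR, dif_pos h, dif_pos h]
  exact ⟨congrArg _ (by omega), congrArg _ (by omega)⟩

end FixedIntervals

section Recurrence

variable {T P : List ℤ} {v i ℓ r : ℕ}

lemma mfiL_eq_of_leftChild_eq_none (hT : T.Nodup) (hP : P.Nodup) (hv : 1 ≤ v ∧ v ≤ P.length)
    (hmin : IsMinFixedInterval T P v i ℓ r) (h : leftChild P v = none) :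
    mfiL T P v i = i := by
  obtain ⟨hℓ, hr, hℓi, hir, I₁, I₂, hI₁, hI₂, -, hr₂, hval⟩ :=
    (isFixedInterval_iff hT hP hv).1 hmin.1
  rw [leftPart_eq_nil hv.1 h] at hI₁
  obtain rfl : I₁ = [] := List.eq_nil_of_length_eq_zero hI₁.1.1
  have hfix : IsFixedInterval T P v i i r :=
    (isFixedInterval_iff hT hP hv).2 ⟨by omega, hr, le_rfl, hir, [], I₂,
      leftPart_eq_nil hv.1 h ▸ hI₁, hI₂, by simp, hr₂, hval⟩
  have := (hmin.le_of_isFixedInterval hT hP hv hfix).1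
  rw [(hmin.mfi_eq hT hP hv).1, show ℓ = i by omega]

lemma IsFixedInterval.exists_leftChild (hT : T.Nodup) (hP : P.Nodup)
    (hv : 1 ≤ v ∧ v ≤ P.length) {u : ℕ} (hu : leftChild P v = some u)
    (h : IsFixedInterval T P v i ℓ r) :
    ∃ j, j < i ∧ val T i < val T j ∧ IsFixedInterval T P u j ℓ (i - 1) := by
  obtain ⟨hℓ, hr, -, hir, I₁, I₂, hI₁, -, hr₁, -, hval⟩ :=
    (isFixedInterval_iff hT hP hv).1 h
  obtain ⟨hu', hPu⟩ := leftChild_spec hP hv hu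
  rw [← hPu] at hI₁
  have hne : seqAt T I₁ ≠ [] := by
    refine List.ne_nil_of_length_pos ?_
    rw [show (seqAt T I₁).length = I₁.length from List.length_map _, hI₁.1.1,
      Psub_eq_append hu']
    simp
  obtain ⟨j, hj, hjmin⟩ := List.mem_map.1 (minval_mem hne)
  refine ⟨j, (hr₁ j hj).2, hval j (List.mem_append_left _ hj),
    hℓ, by omega, I₁, hI₁.1, hj, fun k hk => ?_, hI₁.2, hjmin⟩
  have := hr₁ k hk
  omega

lemma IsFixedInterval.of_leftChild (hT : T.Nodup) (hP : P.Nodup) (hv : 1 ≤ v ∧ v ≤ P.length)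
    {u : ℕ} (hu : leftChild P v = some u) (h : IsFixedInterval T P v i ℓ r) {j ℓ' r' : ℕ}
    (hj : IsFixedInterval T P u j ℓ' r') (hr' : r' < i) (hji : val T i < val T j) :
    IsFixedInterval T P v i ℓ' r := by
  obtain ⟨-, hr, -, hir, I₁, I₂, -, hI₂, -, hr₂, hval⟩ :=
    (isFixedInterval_iff hT hP hv).1 h
  have hjb := hj.bounds
  obtain ⟨hℓ', -, J, hJs, hjJ, hJrange, hJCT, hjmin⟩ := hj
  rw [(leftChild_spec hP hv hu).2] at hJs hJCT
  refine (isFixedInterval_iff hT hP hv).2 ⟨hℓ', hr, by omega, hir, J, I₂, ⟨hJs, hJCT⟩,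
    hI₂,    fun k hk => ⟨(hJrange k hk).1, by have := hJrange k hk; omega⟩, hr₂, ?_⟩
  simp only [List.mem_append]
  rintro k (hk | hk)
  · exact hji.trans_le (hjmin ▸ minval_le (List.mem_map_of_mem hk))
  · exact hval k (List.mem_append_right _ hk)

open Classical in
lemma mfiL_eq_sup_of_leftChild (hT : T.Nodup) (hP : P.Nodup) (hv : 1 ≤ v ∧ v ≤ P.length)
    (hmin : IsMinFixedInterval T P v i ℓ r) {u : ℕ} (hu : leftChild P v = some u) :
    mfiL T P v i = ((Finset.Icc 1 (i - 1)).filter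
      (fun j => val T i < val T j ∧ mfiR T P u j < (i : WithTop ℕ))).sup (mfiL T P u ·) := by
  have hu' := (leftChild_spec hP hv hu).1
  rw [(hmin.mfi_eq hT hP hv).1]
  apply le_antisymm
  · obtain ⟨j, hji, hval, hfix⟩ := hmin.1.exists_leftChild hT hP hv hu
    obtain ⟨ℓj, rj, hminj⟩ := hfix.exists_isMinFixedInterval
    obtain ⟨hℓ, hr⟩ := hminj.le_of_isFixedInterval hT hP hu' hfix
    obtain ⟨hL, hR⟩ := hminj.mfi_eq hT hP hu'
    have := hfix.bounds
    have hj : j ∈ (Finset.Icc 1 (i - 1)).filter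
        (fun j => val T i < val T j ∧ mfiR T P u j < (i : WithTop ℕ)) := by
      simp only [Finset.mem_filter, Finset.mem_Icc, hR, Nat.cast_lt]
      omega
    calc (ℓ : WithBot ℕ) ≤ ℓj := WithBot.coe_le_coe.2 hℓ
      _ = mfiL T P u j := hL.symm
      _ ≤ _ := Finset.le_sup (f := (mfiL T P u ·)) hj
  · refine Finset.sup_le fun j hj => ?_
    obtain ⟨-, hval, hR⟩ := Finset.mem_filter.1 hj
    by_cases hex : ∃ ℓj rj, IsMinFixedInterval T P u j ℓj rj
    · obtain ⟨ℓj, rj, hminj⟩ := hex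
      obtain ⟨hL, hR'⟩ := hminj.mfi_eq hT hP hu'
      rw [hR', Nat.cast_lt] at hR
      rw [hL]
      exact WithBot.coe_le_coe.2 (hmin.le_of_isFixedInterval hT hP hv
        (hmin.1.of_leftChild hT hP hv hu hminj.1 hR hval)).1
    · rw [mfiL, dif_neg hex]
      exact bot_le

end Recurrence

open Classical in
theorem L_recurrence_general
    (T P : List ℤ) (hT : T.Nodup) (hP : P.Nodup)
    (v i : ℕ) (hv : 1 ≤ v ∧ v ≤ P.length)
    :
    (¬(∃ ℓ r, IsMinFixedInterval T P v i ℓ r) → mfiL T P v i = ⊥) ∧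
    ((∃ ℓ r, IsMinFixedInterval T P v i ℓ r) → leftChild P v = none →
      mfiL T P v i = (i : WithBot ℕ)) ∧
    (∀ u, (∃ ℓ r, IsMinFixedInterval T P v i ℓ r) → leftChild P v = some u →
      mfiL T P v i =
        ((Finset.Icc 1 (i - 1)).filter
          (fun j => val T i < val T j ∧ mfiR T P u j < (i : WithTop ℕ))).sup
          (fun j => mfiL T P u j)) := by
  refine ⟨fun h => by rw [mfiL, dif_neg h], ?_, ?_⟩
  · rintro ⟨ℓ, r, hmin⟩ h
    exact mfiL_eq_of_leftChild_eq_none hT hP hv hmin h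
  · rintro u ⟨ℓ, r, hmin⟩ h
    exact mfiL_eq_sup_of_leftChild hT hP hv hmin h

open Classical in
/-- The recurrence for `L(v, i)`, the left endpoint of the minimal
fixed-interval with pivot `(v, i)`:
`L(v,i) = -∞` if `mfi(v,i) = [-∞,∞]`; `L(v,i) = i` if `mfi(v,i) ≠ [-∞,∞]` and `v` has no
left child in `CT(P)`; and otherwise
`L(v,i) = max { L(v.L, j) : 1 ≤ j ≤ i-1, T[i] < T[j], R(v.L, j) < i }`. -/
theorem L_recurrence
    (T P : List ℤ) (hT : T.Nodup) (hP : P.Nodup)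
    (hm : 1 ≤ P.length) (hmn : P.length ≤ T.length)
    (v i : ℕ) (hv : 1 ≤ v ∧ v ≤ P.length) (hi : 1 ≤ i ∧ i ≤ T.length)
    :
    (¬(∃ ℓ r, IsMinFixedInterval T P v i ℓ r) → mfiL T P v i = ⊥) ∧
    ((∃ ℓ r, IsMinFixedInterval T P v i ℓ r) → leftChild P v = none →
      mfiL T P v i = (i : WithBot ℕ)) ∧
    (∀ u, (∃ ℓ r, IsMinFixedInterval T P v i ℓ r) → leftChild P v = some u →
      mfiL T P v i =
        ((Finset.Icc 1 (i - 1)).filter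
          (fun j => val T i < val T j ∧ mfiR T P u j < (i : WithTop ℕ))).sup
          (fun j => mfiL T P u j)) :=
  L_recurrence_general T P hT hP v i hv
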